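/- Let a, b ∈ L(H) be projections of rank one with a ≠ b and ab ≠ 0. If u is a self-adjoint tripotent with au + ua = u and au² + u²a = 2a, and θ ∈ (0, π/2) is such that exp(θ·G(a,u)) applied to a equals b, then cos²θ = ‖aba‖ (operator norm); equivalently θ = arccos(‖aba‖^{1/2}). In particular there is a unique v ∈ L(H) of the form v = θ·u with such u and θ ∈ (0, π/2) satisfying exp(G(a,v)) applied to a equals b. -/

import Mathlib

/-! On the plane spanned by `p = a - uau` and `u`, `G(a,u)` is the generator of a rotation
(`G p = 2u`, `G u = -2p`), while it annihilates `a + uau`; hence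
`exp(θ G(a,u)) a = cos²θ a + sinθ cosθ u + sin²θ uau`. Since `aua = 0`, compressing by `a` gives
`aba = cos²θ a`, so `cos²θ = ‖aba‖` because `‖a‖ = 1`; and `ab + ba = 2cos²θ a + sinθ cosθ u`
recovers `u` from `b` once `θ` is known. -/

variable {H : Type*} [NormedAddCommGroup H] [InnerProductSpace ℂ H] [CompleteSpace H]

/-- For a projection `a` and a self-adjoint `u` in `L(H)`, `G a u` is the bounded linear
operator on `L(H)` given by `z ↦ (ua - au)z - z(ua - au)`. -/
noncomputable def G (a u : H →L[ℂ] H) : (H →L[ℂ] H) →L[ℝ] (H →L[ℂ] H) :=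
  ContinuousLinearMap.mul ℝ (H →L[ℂ] H) (u * a - a * u)
    - (ContinuousLinearMap.mul ℝ (H →L[ℂ] H)).flip (u * a - a * u)

open NormedSpace Real

section Ring
variable {R : Type*} [Ring R] {a u v : R}

theorem IsIdempotentElem.mul_mul_self_eq_zero (ha : IsIdempotentElem a) (h : a * u + u * a = u) :
    a * u * a = 0 := by
  have h' := congrArg (fun z => a * z * a) h
  simp only [mul_add, add_mul, ← mul_assoc, ha.eq] at h'
  simp only [mul_assoc, ha.eq] at h'
  simpa [mul_assoc] using h'

theorem IsIdempotentElem.mul_mul_self_eq_self [IsAddTorsionFree R] (ha : IsIdempotentElem a)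
    (h : a * v + v * a = 2 • a) : a * v * a = a := by
  rw [two_nsmul] at h
  have h' := congrArg (fun z => a * z * a) h
  simp only [mul_add, add_mul, ← mul_assoc, ha.eq] at h'
  simp only [mul_assoc, ha.eq] at h'
  refine nsmul_right_injective two_ne_zero ?_
  simpa only [two_nsmul, mul_assoc] using h'

end Ring

section Exp
variable {E : Type*} [NormedAddCommGroup E] [NormedSpace ℝ E]

theorem hasSum_exp_apply [CompleteSpace E] (T : E →L[ℝ] E) (x : E) :
    HasSum (fun n => (n.factorial⁻¹ : ℝ) • (T ^ n) x) (exp T x) := by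
  simpa using (ContinuousLinearMap.apply ℝ E x).hasSum (exp_series_hasSum_exp' (𝕂 := ℝ) T)

theorem pow_apply_of_rotation {T : E →L[ℝ] E} {x y : E} {ω : ℝ} (hx : T x = ω • y)
    (hy : T y = -(ω • x)) (k : ℕ) :
    (T ^ (2 * k)) x = ((-1) ^ k * ω ^ (2 * k)) • x ∧
      (T ^ (2 * k + 1)) x = ((-1) ^ k * ω ^ (2 * k + 1)) • y := by
  induction k with
  | zero => simp [hx]
  | succ k ih =>
    have h2 : (T ^ (2 * (k + 1))) x = T ((T ^ (2 * k + 1)) x) := by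
      rw [show 2 * (k + 1) = 2 * k + 1 + 1 by ring, pow_succ', mul_apply_eq_comp]
    have h2' : (T ^ (2 * (k + 1))) x = ((-1) ^ (k + 1) * ω ^ (2 * (k + 1))) • x := by
      rw [h2, ih.2, map_smul, hy]
      module
    refine ⟨h2', ?_⟩
    rw [pow_succ', mul_apply_eq_comp, h2', map_smul, hx]
    module

theorem exp_smul_apply_of_rotation [CompleteSpace E] {T : E →L[ℝ] E} {x y : E} {ω : ℝ}
    (hx : T x = ω • y) (hy : T y = -(ω • x)) (t : ℝ) :
    exp (t • T) x = cos (ω * t) • x + sin (ω * t) • y := by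
  refine (hasSum_exp_apply (t • T) x).unique (HasSum.even_add_odd ?_ ?_)
  · convert (hasSum_cos (ω * t)).smul_const x using 2 with k
    rw [smul_pow, smul_apply, (pow_apply_of_rotation hx hy k).1]
    module
  · convert (hasSum_sin (ω * t)).smul_const y using 2 with k
    rw [smul_pow, smul_apply, (pow_apply_of_rotation hx hy k).2]
    module

theorem exp_smul_apply_of_apply_eq_zero [CompleteSpace E] {T : E →L[ℝ] E} {x : E}
    (hx : T x = 0) (t : ℝ) : exp (t • T) x = x := by
  simpa using exp_smul_apply_of_rotation (y := (0 : E)) (ω := 0) (by simpa using hx) (by simp) t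

end Exp

theorem IsStarProjection.norm_eq_one {E : Type*} [NonUnitalNormedRing E] [StarRing E]
    [CStarRing E] {p : E} (hp : IsStarProjection p) (h0 : p ≠ 0) : ‖p‖ = 1 := by
  have h := hp.isSelfAdjoint.norm_mul_self
  rw [hp.isIdempotentElem.eq] at h
  have hp0 : ‖p‖ ≠ 0 := norm_ne_zero_iff.mpr h0
  field_simp at h
  exact h.symm

section Sandwich
variable {R : Type*} [Ring R] [Algebra ℝ R] {a u : R}

theorem IsIdempotentElem.mul_combination_mul (ha : IsIdempotentElem a) (haua : a * u * a = 0)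
    (c d e : ℝ) : a * (c • a + d • u + e • (u * a * u)) * a = c • a := by
  have h : a * (u * a * u) * a = (a * u * a) * (u * a) := by noncomm_ring
  simp only [mul_add, add_mul, mul_smul_comm, smul_mul_assoc, h, haua, ha.eq, zero_mul,
    smul_zero, add_zero]

theorem IsIdempotentElem.mul_combination_add_combination_mul (ha : IsIdempotentElem a)
    (h1 : a * u + u * a = u) (c d e : ℝ) :
    a * (c • a + d • u + e • (u * a * u)) + (c • a + d • u + e • (u * a * u)) * a
      = (2 * c) • a + d • u := by
  have haua := ha.mul_mul_self_eq_zero h1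
  have hl : a * (u * a * u) = (a * u * a) * u := by noncomm_ring
  have hr : (u * a * u) * a = u * (a * u * a) := by noncomm_ring
  simp only [mul_add, add_mul, mul_smul_comm, smul_mul_assoc, ha.eq, hl, hr, haua, zero_mul,
    mul_zero, smul_zero, add_zero]
  nth_rewrite 3 [← h1]
  module

end Sandwich

theorem G_apply (a u z : H →L[ℂ] H) :
    G a u z = (u * a - a * u) * z - z * (u * a - a * u) := rfl

theorem G_smul (a u : H →L[ℂ] H) (t : ℝ) : G a (t • u) = t • G a u := by
  simp only [G, smul_mul_assoc, mul_smul_comm, ← smul_sub, map_smul]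

section GeodesicAction
variable {a u : H →L[ℂ] H} (ha : IsIdempotentElem a) (h1 : a * u + u * a = u)
  (h2 : a * (u * u) + (u * u) * a = 2 • a)

include ha h1 in
theorem G_apply_left : G a u a = u := by
  have h : (u * a - a * u) * a - a * (u * a - a * u)
      = u * (a * a) + (a * a) * u - 2 • (a * u * a) := by noncomm_ring
  rw [G_apply, h, ha.eq, ha.mul_mul_self_eq_zero h1, smul_zero, sub_zero, add_comm, h1]

include h2 in
theorem G_apply_right : G a u u = -((2 : ℝ) • (a - u * a * u)) := by
  have h : (u * a - a * u) * u - u * (u * a - a * u)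
      = u * a * u + u * a * u - (a * (u * u) + (u * u) * a) := by noncomm_ring
  rw [G_apply, h, h2]
  module

include ha h1 h2 in
theorem G_apply_sandwich : G a u (u * a * u) = -u := by
  have h : (u * a - a * u) * (u * a * u) - (u * a * u) * (u * a - a * u)
      = u * (a * u * a) * u + u * (a * u * a) * u
        - ((a * (u * u) * a) * u + u * (a * (u * u) * a)) := by noncomm_ring
  have := IsAddTorsionFree.of_isTorsionFree ℝ (H →L[ℂ] H)
  rw [G_apply, h, ha.mul_mul_self_eq_zero h1, ha.mul_mul_self_eq_self h2, mul_zero, zero_mul,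
    zero_add, zero_sub, h1]

include ha h1 h2 in
theorem exp_smul_G_apply_self (θ : ℝ) :
    exp (θ • G a u) a = cos θ ^ 2 • a + (sin θ * cos θ) • u + sin θ ^ 2 • (u * a * u) := by
  have hfix : G a u (a + u * a * u) = 0 := by
    rw [map_add, G_apply_left ha h1, G_apply_sandwich ha h1 h2, add_neg_cancel]
  have hrot : G a u (a - u * a * u) = (2 : ℝ) • u := by
    rw [map_sub, G_apply_left ha h1, G_apply_sandwich ha h1 h2]
    module
  calc exp (θ • G a u) a
      = exp (θ • G a u) ((1 / 2 : ℝ) • (a + u * a * u) + (1 / 2 : ℝ) • (a - u * a * u)) := by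
        congr 1; module
    _ = (1 / 2 : ℝ) • (a + u * a * u)
          + (1 / 2 : ℝ) • (cos (2 * θ) • (a - u * a * u) + sin (2 * θ) • u) := by
        rw [map_add, map_smul, map_smul, exp_smul_apply_of_apply_eq_zero hfix,
          exp_smul_apply_of_rotation hrot (G_apply_right h2)]
    _ = cos θ ^ 2 • a + (sin θ * cos θ) • u + sin θ ^ 2 • (u * a * u) := by
        rw [cos_two_mul, sin_two_mul, sin_sq]
        module

end GeodesicAction

theorem eq_of_exp_smul_G_apply_self_eq {a u u' : H →L[ℂ] H} {θ θ' : ℝ} (ha : IsIdempotentElem a)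
    (ha0 : a ≠ 0) (h1 : a * u + u * a = u) (h2 : a * (u * u) + (u * u) * a = 2 • a)
    (h1' : a * u' + u' * a = u') (h2' : a * (u' * u') + (u' * u') * a = 2 • a)
    (hθ : θ ∈ Set.Ioo 0 (π / 2)) (hθ' : θ' ∈ Set.Ioo 0 (π / 2))
    (h : exp (θ • G a u) a = exp (θ' • G a u') a) : θ = θ' ∧ u = u' := by
  rw [exp_smul_G_apply_self ha h1 h2, exp_smul_G_apply_self ha h1' h2'] at h
  have hcos_sq : cos θ ^ 2 = cos θ' ^ 2 := by
    apply smul_left_injective ℝ ha0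
    simpa only [ha.mul_combination_mul (ha.mul_mul_self_eq_zero h1),
      ha.mul_combination_mul (ha.mul_mul_self_eq_zero h1')] using congrArg (fun b => a * b * a) h
  have hcos : cos θ = cos θ' :=
    (pow_left_inj₀ (cos_pos_of_mem_Ioo ⟨by linarith [hθ.1, pi_pos], hθ.2⟩).le
      (cos_pos_of_mem_Ioo ⟨by linarith [hθ'.1, pi_pos], hθ'.2⟩).le two_ne_zero).1 hcos_sq
  obtain rfl : θ = θ' :=
    injOn_cos ⟨hθ.1.le, by linarith [hθ.2, pi_pos]⟩ ⟨hθ'.1.le, by linarith [hθ'.2, pi_pos]⟩ hcos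
  have hsc : sin θ * cos θ ≠ 0 :=
    (mul_pos (sin_pos_of_pos_of_lt_pi hθ.1 (by linarith [hθ.2, pi_pos]))
      (cos_pos_of_mem_Ioo ⟨by linarith [hθ.1, pi_pos], hθ.2⟩)).ne'
  refine ⟨rfl, smul_right_injective _ hsc (add_left_cancel (a := (2 * cos θ ^ 2) • a) ?_)⟩
  simpa only [ha.mul_combination_add_combination_mul h1,
    ha.mul_combination_add_combination_mul h1'] using congrArg (fun b => a * b + b * a) h

theorem geodesic_angle_eq_arccos_general (a b u : H →L[ℂ] H) (θ : ℝ)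
    (hasa : IsSelfAdjoint a) (haidem : a * a = a)
    (hab : a * b ≠ 0)
    (husa : IsSelfAdjoint u) (hu3 : u * u * u = u)
    (h1 : a * u + u * a = u) (h2 : a * (u * u) + (u * u) * a = 2 • a)
    (hθ0 : 0 < θ) (hθ1 : θ < Real.pi / 2)
    (hexp : NormedSpace.exp (θ • G a u) a = b) :
    Real.cos θ ^ 2 = ‖a * b * a‖ ∧
    θ = Real.arccos (Real.sqrt ‖a * b * a‖) ∧
    ∃! v : H →L[ℂ] H, ∃ (u' : H →L[ℂ] H) (θ' : ℝ),
      IsSelfAdjoint u' ∧ u' * u' * u' = u' ∧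
      a * u' + u' * a = u' ∧ a * (u' * u') + (u' * u') * a = 2 • a ∧
      0 < θ' ∧ θ' < Real.pi / 2 ∧ v = θ' • u' ∧
      NormedSpace.exp (G a v) a = b := by
  have ha : IsIdempotentElem a := haidem
  have ha0 : a ≠ 0 := left_ne_zero_of_mul hab
  have haba : a * b * a = cos θ ^ 2 • a := by
    rw [← hexp, exp_smul_G_apply_self ha h1 h2]
    exact ha.mul_combination_mul (ha.mul_mul_self_eq_zero h1) _ _ _
  have hnorm : cos θ ^ 2 = ‖a * b * a‖ := by
    rw [haba, norm_smul, IsStarProjection.norm_eq_one ⟨ha, hasa⟩ ha0, mul_one,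
      norm_of_nonneg (by positivity)]
  refine ⟨hnorm, ?_, ⟨θ • u, ⟨u, θ, husa, hu3, h1, h2, hθ0, hθ1, rfl, by rwa [G_smul]⟩, ?_⟩⟩
  · rw [← hnorm, sqrt_sq (cos_nonneg_of_mem_Icc ⟨by linarith, hθ1.le⟩),
      arccos_cos hθ0.le (by linarith [pi_pos])]
  · rintro _ ⟨u', θ', -, -, h1', h2', hθ0', hθ1', rfl, hexp'⟩
    rw [G_smul] at hexp'
    obtain ⟨rfl, rfl⟩ := eq_of_exp_smul_G_apply_self_eq ha ha0 h1' h2' h1 h2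
      ⟨hθ0', hθ1'⟩ ⟨hθ0, hθ1⟩ (hexp'.trans hexp.symm)
    rfl

/-- Let `a, b ∈ L(H)` be rank-one projections with `a ≠ b`, `ab ≠ 0`.
If `u` is a self-adjoint tripotent with `au + ua = u` and `au² + u²a = 2a`, and
`θ ∈ (0, π/2)` satisfies `exp(θ·G(a,u)) a = b`, then `cos²θ = ‖aba‖`, i.e.
`θ = arccos(√‖aba‖)`; and there is a unique `v = θ'·u'` of this form with
`exp(G(a,v)) a = b`. -/
theorem geodesic_angle_eq_arccos (a b u : H →L[ℂ] H) (θ : ℝ)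
    (hasa : IsSelfAdjoint a) (haidem : a * a = a)
    (harank : Module.finrank ℂ (LinearMap.range (a : H →ₗ[ℂ] H)) = 1)
    (hbsa : IsSelfAdjoint b) (hbidem : b * b = b)
    (hbrank : Module.finrank ℂ (LinearMap.range (b : H →ₗ[ℂ] H)) = 1)
    (hne : a ≠ b) (hab : a * b ≠ 0)
    (husa : IsSelfAdjoint u) (hu3 : u * u * u = u)
    (h1 : a * u + u * a = u) (h2 : a * (u * u) + (u * u) * a = 2 • a)
    (hθ0 : 0 < θ) (hθ1 : θ < Real.pi / 2)
    (hexp : NormedSpace.exp (θ • G a u) a = b) :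
    Real.cos θ ^ 2 = ‖a * b * a‖ ∧
    θ = Real.arccos (Real.sqrt ‖a * b * a‖) ∧
    ∃! v : H →L[ℂ] H, ∃ (u' : H →L[ℂ] H) (θ' : ℝ),
      IsSelfAdjoint u' ∧ u' * u' * u' = u' ∧
      a * u' + u' * a = u' ∧ a * (u' * u') + (u' * u') * a = 2 • a ∧
      0 < θ' ∧ θ' < Real.pi / 2 ∧ v = θ' • u' ∧
      NormedSpace.exp (G a v) a = b :=
  geodesic_angle_eq_arccos_general a b u θ hasa haidem hab husa hu3 h1 h2 hθ0 hθ1 hexp
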